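/- arXiv:2106.02536 — 8 statements merged into one kernel-verified Lean document; each statement's English description precedes it below -/
import Mathlib

section
/- Let l > 0 and let Q denote the Minkowski quadratic form on ℝ^(d+2) given by Q(x) = x₀² − x₁² − ⋯ − x_{d+1}². For all real numbers t and s, the points p(t) = (t, √(l²+t²), 0, …, 0) and q(s) = (s, −√(l²+s²), 0, …, 0) satisfy Q(p(t)) = Q(q(s)) = −l² (i.e. both lie on the de Sitter hyperboloid −x₀² + Σᵢ xᵢ² = l²), and Q(p(t) − q(s)) < 0, i.e. every point of one branch of the hyperbola x₁² − x₀² = l², x₂ = ⋯ = x_{d+1} = 0 is spacelike separated from every point of the other branch. -/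
/-- Minkowski quadratic form on ℝ^(d+2): Q(x) = x₀² − x₁² − ⋯ − x_{d+1}². -/
noncomputable def minkQ (d : ℕ) (x : Fin (d + 2) → ℝ) : ℝ :=
  x 0 ^ 2 - ∑ i : Fin (d + 1), x i.succ ^ 2

/-- Point on one branch of the hyperbola x₁² − x₀² = l². -/
noncomputable def hypP (d : ℕ) (l t : ℝ) : Fin (d + 2) → ℝ :=
  fun i => if i = 0 then t else if i = 1 then Real.sqrt (l ^ 2 + t ^ 2) else 0

/-- Point on the other branch of the hyperbola x₁² − x₀² = l². -/
noncomputable def hypQ (d : ℕ) (l s : ℝ) : Fin (d + 2) → ℝ :=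
  fun i => if i = 0 then s else if i = 1 then -Real.sqrt (l ^ 2 + s ^ 2) else 0

/-! Both branches lie in the plane `x₂ = ⋯ = x_{d+1} = 0`, where `Q` is `x₀² − x₁²`. Since
`√(l² + t²) > |t|` for `l ≠ 0`, the spatial gap `√(l² + t²) + √(l² + s²)` between the branches
exceeds the time gap `|t − s|`. -/

lemma minkQ_eq_of_forall_succ_succ_eq_zero {d : ℕ} {x : Fin (d + 2) → ℝ}
    (hx : ∀ i : Fin d, x i.succ.succ = 0) : minkQ d x = x 0 ^ 2 - x 1 ^ 2 := by
  simp [minkQ, Fin.sum_univ_succ, hx]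

lemma hypP_succ_succ (d : ℕ) (l t : ℝ) (i : Fin d) : hypP d l t i.succ.succ = 0 := by
  simp [hypP, Fin.ext_iff]

lemma hypQ_succ_succ (d : ℕ) (l s : ℝ) (i : Fin d) : hypQ d l s i.succ.succ = 0 := by
  simp [hypQ, Fin.ext_iff]

lemma minkQ_hypP (d : ℕ) (l t : ℝ) : minkQ d (hypP d l t) = -l ^ 2 := by
  rw [minkQ_eq_of_forall_succ_succ_eq_zero (hypP_succ_succ d l t)]
  simp [hypP, Real.sq_sqrt (by positivity : 0 ≤ l ^ 2 + t ^ 2)]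

lemma minkQ_hypQ (d : ℕ) (l s : ℝ) : minkQ d (hypQ d l s) = -l ^ 2 := by
  rw [minkQ_eq_of_forall_succ_succ_eq_zero (hypQ_succ_succ d l s)]
  simp [hypQ, Real.sq_sqrt (by positivity : 0 ≤ l ^ 2 + s ^ 2)]

lemma minkQ_hypP_sub_hypQ (d : ℕ) (l t s : ℝ) :
    minkQ d (hypP d l t - hypQ d l s) =
      (t - s) ^ 2 - (Real.sqrt (l ^ 2 + t ^ 2) + Real.sqrt (l ^ 2 + s ^ 2)) ^ 2 := by
  rw [minkQ_eq_of_forall_succ_succ_eq_zero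
    (fun i => by simp [hypP_succ_succ, hypQ_succ_succ])]
  simp [hypP, hypQ]

lemma abs_lt_sqrt_sq_add_sq {l : ℝ} (hl : l ≠ 0) (t : ℝ) : |t| < Real.sqrt (l ^ 2 + t ^ 2) := by
  rw [Real.lt_sqrt (abs_nonneg t), sq_abs]
  linarith [pow_pos (abs_pos.mpr hl) 2, sq_abs l]

lemma abs_sub_lt_sqrt_add_sqrt {l : ℝ} (hl : l ≠ 0) (t s : ℝ) :
    |t - s| < Real.sqrt (l ^ 2 + t ^ 2) + Real.sqrt (l ^ 2 + s ^ 2) :=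
  (abs_sub t s).trans_lt <|
    add_lt_add (abs_lt_sqrt_sq_add_sq hl t) (abs_lt_sqrt_sq_add_sq hl s)

theorem deSitter_hyperbola_branches_spacelike_separated (d : ℕ) (l : ℝ) (hl : 0 < l)
    (t s : ℝ) :
    minkQ d (hypP d l t) = -l ^ 2 ∧ minkQ d (hypQ d l s) = -l ^ 2 ∧
      minkQ d (hypP d l t - hypQ d l s) < 0 := by
  refine ⟨minkQ_hypP d l t, minkQ_hypQ d l s, ?_⟩
  rw [minkQ_hypP_sub_hypQ, sub_neg, sq_lt_sq]
  exact (abs_sub_lt_sqrt_add_sqrt hl.ne' t s).trans_le (le_abs_self _)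
end

section
/- Let d ≥ 3 be an integer, l > 0 and μ > 0, and define V(r) = 1 − μ/r^{d−2} − r²/l² for r > 0. Suppose r_c > 0 satisfies V(r_c) = 0 and V(r) < 0 for all r > r_c. Then the change in azimuthal angle along a null curve of constant t in the equatorial plane from the cosmological horizon to infinity satisfies Δφ(μ) = ∫_{r_c}^{∞} dr / (r·√(−V(r))) > π/2 (the integral being taken in [0, ∞], with the strict inequality holding in either case). -/
/-!
For `r > r_c` the root condition `V(r_c) = 0` turns the difference `(r² / r_c² - 1) - (-V(r))` into
`μ (r² / r_c^(n+2) - 1 / r^n)`, which is positive since `r^(n+2) > r_c^(n+2)`. Hence the integrand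
strictly dominates `1 / (r √(r² / r_c² - 1))`, the integrand of pure de Sitter space with
cosmological horizon `r_c`, whose integral is `π / 2` with antiderivative `arccos (r_c / r)`.
-/

open MeasureTheory Set Filter Topology Real

/-- `V(r)` with `n = d - 2` for the `(d+1)`-dimensional spacetime. -/
noncomputable def schwarzschildDeSitterV (n : ℕ) (μ l r : ℝ) : ℝ := 1 - μ / r ^ n - r ^ 2 / l ^ 2

section DeSitter

variable {a : ℝ}

theorem hasDerivAt_arccos_div (ha : 0 < a) {r : ℝ} (hr : a < r) :
    HasDerivAt (fun r => arccos (a / r)) (1 / (r * √(r ^ 2 / a ^ 2 - 1))) r := by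
  have hr0 : 0 < r := ha.trans hr
  have hsq : 0 < r ^ 2 - a ^ 2 := by nlinarith
  have hinner : HasDerivAt (fun r : ℝ => a / r) (a * -(r ^ 2)⁻¹) r :=
    (hasDerivAt_inv hr0.ne').const_mul a
  have hlt : a / r < 1 := (div_lt_one hr0).2 hr
  refine ((hasDerivAt_arccos (by linarith [div_pos ha hr0]) hlt.ne).comp r hinner).congr_deriv ?_
  have hs1 : √(1 - (a / r) ^ 2) = √(r ^ 2 - a ^ 2) / r := by
    rw [show 1 - (a / r) ^ 2 = (r ^ 2 - a ^ 2) / r ^ 2 by field_simp, sqrt_div hsq.le,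
      sqrt_sq hr0.le]
  have hs2 : √(r ^ 2 / a ^ 2 - 1) = √(r ^ 2 - a ^ 2) / a := by
    rw [show r ^ 2 / a ^ 2 - 1 = (r ^ 2 - a ^ 2) / a ^ 2 by field_simp, sqrt_div hsq.le,
      sqrt_sq ha.le]
  have : 0 < √(r ^ 2 - a ^ 2) := sqrt_pos.2 hsq
  rw [hs1, hs2]
  field_simp

theorem lintegral_deSitter_angle (ha : 0 < a) :
    ∫⁻ r in Ioi a, ENNReal.ofReal (1 / (r * √(r ^ 2 / a ^ 2 - 1))) = ENNReal.ofReal (π / 2) := by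
  have hcont : ContinuousWithinAt (fun r => arccos (a / r)) (Ici a) a :=
    (continuous_arccos.continuousAt.comp (continuousAt_const.div continuousAt_id ha.ne'))
      |>.continuousWithinAt
  have hderiv : ∀ r ∈ Ioi a, HasDerivAt (fun r => arccos (a / r))
      (1 / (r * √(r ^ 2 / a ^ 2 - 1))) r := fun r hr => hasDerivAt_arccos_div ha hr
  have hnonneg : ∀ r ∈ Ioi a, 0 ≤ 1 / (r * √(r ^ 2 / a ^ 2 - 1)) := fun r hr => by
    have : 0 < r := ha.trans hr
    positivity
  have hlim : Tendsto (fun r => arccos (a / r)) atTop (𝓝 (π / 2)) := by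
    simpa [arccos_zero, Function.comp_def] using (continuous_arccos.tendsto 0).comp
      (tendsto_const_nhds.div_atTop tendsto_id)
  rw [← ofReal_integral_eq_lintegral_ofReal
      (integrableOn_Ioi_deriv_of_nonneg hcont hderiv hnonneg hlim)
      ((ae_restrict_iff' measurableSet_Ioi).2 (.of_forall hnonneg)),
    integral_Ioi_of_hasDerivAt_of_nonneg hcont hderiv hnonneg hlim]
  simp [div_self ha.ne']

end DeSitter

theorem neg_schwarzschildDeSitterV_lt {n : ℕ} {μ l r_c r : ℝ} (hμ : 0 < μ) (hrc : 0 < r_c)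
    (hroot : schwarzschildDeSitterV n μ l r_c = 0) (hr : r_c < r) :
    -schwarzschildDeSitterV n μ l r < r ^ 2 / r_c ^ 2 - 1 := by
  have hr0 : 0 < r := hrc.trans hr
  have hgap : r ^ 2 / r_c ^ 2 - 1 - -schwarzschildDeSitterV n μ l r
      = μ * (r ^ 2 / r_c ^ (n + 2) - 1 / r ^ n) := by
    have hrl : r ^ 2 / l ^ 2 = r ^ 2 / r_c ^ 2 * (1 - μ / r_c ^ n) := by
      rw [schwarzschildDeSitterV] at hroot
      rw [show 1 - μ / r_c ^ n = r_c ^ 2 / l ^ 2 by linarith]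
      field_simp
    rw [schwarzschildDeSitterV, hrl]
    field_simp
    ring
  have hpow : r_c ^ (n + 2) < r ^ (n + 2) := pow_lt_pow_left₀ hr hrc.le (by omega)
  have hlt : 1 / r ^ n < r ^ 2 / r_c ^ (n + 2) := by
    rw [div_lt_div_iff₀ (by positivity) (by positivity)]
    linarith [show r ^ 2 * r ^ n = r ^ (n + 2) by ring]
  linarith [mul_pos hμ (sub_pos.2 hlt)]

theorem schwarzschild_deSitter_angle_gt_pi_div_two_general
    (d : ℕ) (l μ : ℝ) (hμ : 0 < μ) (r_c : ℝ) (hrc : 0 < r_c)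
    (hroot : 1 - μ / r_c ^ (d - 2) - r_c ^ 2 / l ^ 2 = 0)
    (hneg : ∀ r : ℝ, r_c < r → 1 - μ / r ^ (d - 2) - r ^ 2 / l ^ 2 < 0) :
    ENNReal.ofReal (Real.pi / 2) <
      ∫⁻ r in Set.Ioi r_c,
        ENNReal.ofReal
          (1 / (r * Real.sqrt (-(1 - μ / r ^ (d - 2) - r ^ 2 / l ^ 2)))) := by
  rw [← lintegral_deSitter_angle hrc]
  refine setLIntegral_strict_mono measurableSet_Ioi (by simp) (by fun_prop)
    (lintegral_deSitter_angle hrc ▸ ENNReal.ofReal_ne_top) (.of_forall fun r hr => ?_)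
  have hr0 : 0 < r := hrc.trans hr
  have hV : 0 < -schwarzschildDeSitterV (d - 2) μ l r := neg_pos.2 (hneg r hr)
  have hsqrt : √(-schwarzschildDeSitterV (d - 2) μ l r) < √(r ^ 2 / r_c ^ 2 - 1) :=
    sqrt_lt_sqrt hV.le (neg_schwarzschildDeSitterV_lt hμ hrc hroot hr)
  have : 0 < √(-schwarzschildDeSitterV (d - 2) μ l r) := sqrt_pos.2 hV
  exact (ENNReal.ofReal_lt_ofReal_iff (by positivity)).2 (one_div_lt_one_div_of_lt
    (by positivity) (mul_lt_mul_of_pos_left hsqrt hr0))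

theorem schwarzschild_deSitter_angle_gt_pi_div_two
    (d : ℕ) (hd : 3 ≤ d) (l μ : ℝ) (hl : 0 < l) (hμ : 0 < μ) (r_c : ℝ) (hrc : 0 < r_c)
    (hroot : 1 - μ / r_c ^ (d - 2) - r_c ^ 2 / l ^ 2 = 0)
    (hneg : ∀ r : ℝ, r_c < r → 1 - μ / r ^ (d - 2) - r ^ 2 / l ^ 2 < 0) :
    ENNReal.ofReal (Real.pi / 2) <
      ∫⁻ r in Set.Ioi r_c,
        ENNReal.ofReal
          (1 / (r * Real.sqrt (-(1 - μ / r ^ (d - 2) - r ^ 2 / l ^ 2)))) :=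
  schwarzschild_deSitter_angle_gt_pi_div_two_general d l μ hμ r_c hrc hroot hneg
end

section
/- Let a > 0 and R > 0. The function ρ ↦ √((ρ² + a²)/(ρ² − R²)) − 1 is integrable on (R, ∞), and the time of flight T(R) = 2·∫_{R}^{∞} [√((ρ² + a²)/(ρ² − R²)) − 1] dρ − 2R satisfies T(R) > 0. -/
/-!
For `a = 0` the integrand is `ρ / √(ρ² - R²) - 1`, the derivative of `√(ρ² - R²) - ρ`, which
vanishes at infinity; so its integral over `(R, ∞)` is exactly `R` and the time of flight is `0`.
The integrand is strictly increasing in `a²`, which makes the time of flight positive once `a ≠ 0`.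
Integrability follows by rationalizing: the integrand equals
`(a² + R²) / (√(ρ² - R²) (√(ρ² + a²) + √(ρ² - R²)))`, at most `(a² + R²) / R²` times the flat one.
-/

open MeasureTheory Filter Set Topology

/-- `dt/dρ - 1` along the null geodesic with closest approach `R` through a throat of width `a`. -/
noncomputable def timeDelayIntegrand (a R ρ : ℝ) : ℝ := √((ρ ^ 2 + a ^ 2) / (ρ ^ 2 - R ^ 2)) - 1

lemma one_le_div_sq_sub_sq {a R ρ : ℝ} (hρ : R ^ 2 < ρ ^ 2) :
    1 ≤ (ρ ^ 2 + a ^ 2) / (ρ ^ 2 - R ^ 2) :=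
  (one_le_div (by linarith)).2 (by nlinarith)

lemma timeDelayIntegrand_nonneg {a R ρ : ℝ} (hρ : R ^ 2 < ρ ^ 2) :
    0 ≤ timeDelayIntegrand a R ρ :=
  sub_nonneg.2 (Real.one_le_sqrt.2 (one_le_div_sq_sub_sq hρ))

lemma timeDelayIntegrand_lt_of_sq_lt {a b R ρ : ℝ} (hab : b ^ 2 < a ^ 2) (hρ : R ^ 2 < ρ ^ 2) :
    timeDelayIntegrand b R ρ < timeDelayIntegrand a R ρ := by
  unfold timeDelayIntegrand
  gcongr

lemma timeDelayIntegrand_eq_div {a R ρ : ℝ} (hρ : R ^ 2 < ρ ^ 2) :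
    timeDelayIntegrand a R ρ =
      (a ^ 2 + R ^ 2) / (√(ρ ^ 2 - R ^ 2) * (√(ρ ^ 2 + a ^ 2) + √(ρ ^ 2 - R ^ 2))) := by
  have hq : 0 < √(ρ ^ 2 - R ^ 2) := Real.sqrt_pos.2 (by linarith)
  have hq2 : √(ρ ^ 2 - R ^ 2) ^ 2 = ρ ^ 2 - R ^ 2 := Real.sq_sqrt (by linarith)
  have hs2 : √(ρ ^ 2 + a ^ 2) ^ 2 = ρ ^ 2 + a ^ 2 := Real.sq_sqrt (by positivity)
  rw [timeDelayIntegrand, Real.sqrt_div (by positivity), eq_div_iff (by positivity)]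
  field_simp
  linear_combination hs2 - hq2

lemma timeDelayIntegrand_le_mul {a b R ρ : ℝ} (hab : b ^ 2 ≤ a ^ 2) (hbR : 0 < b ^ 2 + R ^ 2)
    (hρ : R ^ 2 < ρ ^ 2) :
    timeDelayIntegrand a R ρ ≤ (a ^ 2 + R ^ 2) / (b ^ 2 + R ^ 2) * timeDelayIntegrand b R ρ := by
  have hs : √(ρ ^ 2 + b ^ 2) ≤ √(ρ ^ 2 + a ^ 2) := Real.sqrt_le_sqrt (by linarith)
  rw [timeDelayIntegrand_eq_div hρ, timeDelayIntegrand_eq_div hρ, ← mul_div_assoc,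
    div_mul_cancel₀ _ hbR.ne']
  gcongr

lemma measurable_timeDelayIntegrand (a R : ℝ) : Measurable (timeDelayIntegrand a R) := by
  unfold timeDelayIntegrand
  fun_prop

lemma hasDerivAt_sqrt_sq_sub_sq_sub_self {R ρ : ℝ} (hρ : 0 ≤ ρ) (hρR : ρ ^ 2 ≠ R ^ 2) :
    HasDerivAt (fun x => √(x ^ 2 - R ^ 2) - x) (timeDelayIntegrand 0 R ρ) ρ := by
  have hd : HasDerivAt (fun x : ℝ => x ^ 2 - R ^ 2) (2 * ρ) ρ := by
    simpa using (hasDerivAt_pow 2 ρ).sub_const (R ^ 2)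
  refine (((Real.hasDerivAt_sqrt (sub_ne_zero.2 hρR)).comp ρ hd).sub
    (hasDerivAt_id ρ)).congr_deriv ?_
  rw [timeDelayIntegrand, zero_pow two_ne_zero, add_zero, Real.sqrt_div (sq_nonneg ρ),
    Real.sqrt_sq hρ]
  field_simp

lemma hasDerivAt_sqrt_sq_sub_sq_sub_self_of_lt {R ρ : ℝ} (hR : 0 ≤ R) (hρ : R < ρ) :
    HasDerivAt (fun x => √(x ^ 2 - R ^ 2) - x) (timeDelayIntegrand 0 R ρ) ρ :=
  hasDerivAt_sqrt_sq_sub_sq_sub_self (hR.trans hρ.le) (pow_lt_pow_left₀ hρ hR two_ne_zero).ne'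

lemma tendsto_sqrt_sq_sub_sq_sub_self_atTop (R : ℝ) :
    Tendsto (fun x => √(x ^ 2 - R ^ 2) - x) atTop (𝓝 0) := by
  have hden : Tendsto (fun x => √(x ^ 2 - R ^ 2) + x) atTop atTop :=
    tendsto_id.nonneg_add_atTop fun _ => Real.sqrt_nonneg _
  refine ((tendsto_const_nhds (x := -R ^ 2)).div_atTop hden).congr' ?_
  filter_upwards [eventually_gt_atTop |R|] with x hx
  have hR : R ^ 2 < x ^ 2 :=
    sq_lt_sq' (by linarith [neg_abs_le R]) (lt_of_le_of_lt (le_abs_self R) hx)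
  have hq2 : √(x ^ 2 - R ^ 2) ^ 2 = x ^ 2 - R ^ 2 := Real.sq_sqrt (by linarith)
  have hx0 : 0 < √(x ^ 2 - R ^ 2) + x := by positivity [(abs_nonneg R).trans_lt hx]
  rw [div_eq_iff hx0.ne']
  linear_combination -hq2

lemma integrableOn_timeDelayIntegrand_zero {R : ℝ} (hR : 0 ≤ R) :
    IntegrableOn (timeDelayIntegrand 0 R) (Ioi R) :=
  integrableOn_Ioi_deriv_of_nonneg (by fun_prop)
    (fun _ hρ => hasDerivAt_sqrt_sq_sub_sq_sub_self_of_lt hR hρ)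
    (fun _ hρ => timeDelayIntegrand_nonneg (pow_lt_pow_left₀ hρ hR two_ne_zero))
    (tendsto_sqrt_sq_sub_sq_sub_self_atTop R)

lemma integral_timeDelayIntegrand_zero {R : ℝ} (hR : 0 ≤ R) :
    ∫ ρ in Ioi R, timeDelayIntegrand 0 R ρ = R := by
  rw [integral_Ioi_of_hasDerivAt_of_nonneg (by fun_prop)
    (fun _ hρ => hasDerivAt_sqrt_sq_sub_sq_sub_self_of_lt hR hρ)
    (fun _ hρ => timeDelayIntegrand_nonneg (pow_lt_pow_left₀ hρ hR two_ne_zero))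
    (tendsto_sqrt_sq_sub_sq_sub_self_atTop R)]
  simp

lemma integrableOn_timeDelayIntegrand (a : ℝ) {R : ℝ} (hR : 0 < R) :
    IntegrableOn (timeDelayIntegrand a R) (Ioi R) := by
  refine ((integrableOn_timeDelayIntegrand_zero hR.le).const_mul
    ((a ^ 2 + R ^ 2) / (0 ^ 2 + R ^ 2))).mono'
    (measurable_timeDelayIntegrand a R).aestronglyMeasurable ?_
  filter_upwards [ae_restrict_mem measurableSet_Ioi] with ρ hρ
  have hρR : R ^ 2 < ρ ^ 2 := pow_lt_pow_left₀ hρ hR.le two_ne_zero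
  rw [Real.norm_of_nonneg (timeDelayIntegrand_nonneg hρR)]
  exact timeDelayIntegrand_le_mul (by simpa using sq_nonneg a) (by positivity) hρR

lemma setIntegral_timeDelayIntegrand_lt {a b R : ℝ} (hR : 0 < R) (hab : b ^ 2 < a ^ 2) :
    ∫ ρ in Ioi R, timeDelayIntegrand b R ρ < ∫ ρ in Ioi R, timeDelayIntegrand a R ρ := by
  have hlt : ∀ ρ ∈ Ioi R, timeDelayIntegrand b R ρ < timeDelayIntegrand a R ρ := fun ρ hρ =>
    timeDelayIntegrand_lt_of_sq_lt hab (pow_lt_pow_left₀ hρ hR.le two_ne_zero)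
  have ha := integrableOn_timeDelayIntegrand a hR
  have hb := integrableOn_timeDelayIntegrand b hR
  rw [← sub_pos, ← integral_sub ha hb, setIntegral_pos_iff_support_of_nonneg_ae]
  · rw [inter_eq_right.2 fun ρ hρ => Function.mem_support.2 (sub_pos.2 (hlt ρ hρ)).ne',
      Real.volume_Ioi]
    exact ENNReal.zero_lt_top
  · filter_upwards [ae_restrict_mem measurableSet_Ioi] with ρ hρ
    exact (sub_pos.2 (hlt ρ hρ)).le
  · exact ha.sub hb

theorem wormhole_time_of_flight_positive (a R : ℝ) (ha : 0 < a) (hR : 0 < R) :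
    IntegrableOn (fun ρ : ℝ => Real.sqrt ((ρ ^ 2 + a ^ 2) / (ρ ^ 2 - R ^ 2)) - 1)
      (Set.Ioi R) ∧
    0 < 2 * (∫ ρ in Set.Ioi R, (Real.sqrt ((ρ ^ 2 + a ^ 2) / (ρ ^ 2 - R ^ 2)) - 1))
        - 2 * R := by
  have hdelay := setIntegral_timeDelayIntegrand_lt (b := 0) hR
    (pow_lt_pow_left₀ ha le_rfl two_ne_zero)
  rw [integral_timeDelayIntegrand_zero hR.le] at hdelay
  unfold timeDelayIntegrand at hdelay
  exact ⟨integrableOn_timeDelayIntegrand a hR, by linarith⟩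
end

section
/- Let a > 0 and R > 0. The function r ↦ √((R² + a²)/((r² − R²)(r² + a²))) is integrable on (R, ∞) and 2·∫_{R}^{∞} √((R² + a²)/((r² − R²)(r² + a²))) dr ≥ π. -/
/-!
In flat space (`a = 0`) the integrand is `R / (r √(r² - R²))`, the derivative of `arccos (R / r)`,
so its integral over `(R, ∞)` is `π / 2`. For a wormhole the square of the integrand differs from
the flat one by the factor `(R² + a²) r² / (R² (r² + a²))`, which lies between `1` and
`(R² + a²) / R²` for `r > R`. The integrand is therefore squeezed between the flat integrand and a
constant multiple of it, which gives both integrability and `Δφ ≥ π`.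
-/

open MeasureTheory Set Real Filter Topology

noncomputable def angleIntegrand (a R r : ℝ) : ℝ :=
  √((R ^ 2 + a ^ 2) / ((r ^ 2 - R ^ 2) * (r ^ 2 + a ^ 2)))

lemma angleIntegrand_nonneg (a R r : ℝ) : 0 ≤ angleIntegrand a R r :=
  sqrt_nonneg _

@[fun_prop]
lemma measurable_angleIntegrand (a R : ℝ) : Measurable (angleIntegrand a R) := by
  unfold angleIntegrand
  fun_prop

lemma angleIntegrand_zero {R r : ℝ} (hR : 0 ≤ R) (hr : R < r) :
    angleIntegrand 0 R r = R / (r * √(r ^ 2 - R ^ 2)) := by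
  have hr0 : 0 ≤ r := hR.trans hr.le
  rw [angleIntegrand, zero_pow two_ne_zero, add_zero, add_zero, sqrt_div (sq_nonneg R),
    sqrt_mul (by nlinarith), sqrt_sq hR, sqrt_sq hr0]
  ring

lemma hasDerivAt_arccos_const_div {R r : ℝ} (hR : 0 ≤ R) (hr : R < r) :
    HasDerivAt (fun x => arccos (R / x)) (angleIntegrand 0 R r) r := by
  have hr0 : 0 < r := hR.trans_lt hr
  have hsqrt : √(1 - (R / r) ^ 2) = √(r ^ 2 - R ^ 2) / r := by
    rw [show 1 - (R / r) ^ 2 = (r ^ 2 - R ^ 2) / r ^ 2 by field_simp,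
      sqrt_div (by nlinarith), sqrt_sq hr0.le]
  have hs : 0 < √(r ^ 2 - R ^ 2) := sqrt_pos.2 (by nlinarith)
  have hinv : HasDerivAt (fun x => R / x) (R * -(r ^ 2)⁻¹) r := by
    simpa only [div_eq_mul_inv] using (hasDerivAt_inv hr0.ne').const_mul R
  refine ((hasDerivAt_arccos (by linarith [div_nonneg hR hr0.le])
    ((div_lt_one hr0).2 hr).ne).comp r hinv).congr_deriv ?_
  rw [angleIntegrand_zero hR hr, hsqrt]
  field_simp

lemma tendsto_arccos_const_div_atTop (R : ℝ) :
    Tendsto (fun x => arccos (R / x)) atTop (𝓝 (π / 2)) := by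
  have hdiv : Tendsto (fun x => R / x) atTop (𝓝 0) := tendsto_const_nhds.div_atTop tendsto_id
  rw [← arccos_zero]
  exact (continuous_arccos.tendsto 0).comp hdiv

section Flat

variable {R : ℝ} (hR : 0 < R)
include hR

lemma continuousWithinAt_arccos_const_div :
    ContinuousWithinAt (fun x => arccos (R / x)) (Ici R) R :=
  (continuous_arccos.continuousAt.comp
    (continuousAt_const.div continuousAt_id hR.ne')).continuousWithinAt

lemma integrableOn_angleIntegrand_zero : IntegrableOn (angleIntegrand 0 R) (Ioi R) :=
  integrableOn_Ioi_deriv_of_nonneg (continuousWithinAt_arccos_const_div hR)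
    (fun _ hr => hasDerivAt_arccos_const_div hR.le hr) (fun r _ => angleIntegrand_nonneg 0 R r)
    (tendsto_arccos_const_div_atTop R)

lemma integral_angleIntegrand_zero : ∫ r in Ioi R, angleIntegrand 0 R r = π / 2 := by
  rw [integral_Ioi_of_hasDerivAt_of_nonneg (continuousWithinAt_arccos_const_div hR)
    (fun _ hr => hasDerivAt_arccos_const_div hR.le hr) (fun r _ => angleIntegrand_nonneg 0 R r)
    (tendsto_arccos_const_div_atTop R), div_self hR.ne', arccos_one, sub_zero]

end Flat

lemma angleIntegrand_zero_le (a : ℝ) {R r : ℝ} (hR : 0 ≤ R) (hr : R < r) :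
    angleIntegrand 0 R r ≤ angleIntegrand a R r := by
  have hs : 0 < r ^ 2 - R ^ 2 := by nlinarith
  have hr0 : 0 < r := hR.trans_lt hr
  refine sqrt_le_sqrt ?_
  rw [div_le_div_iff₀ (by positivity) (by positivity)]
  nlinarith [mul_nonneg (sq_nonneg a) (sq_nonneg (r ^ 2 - R ^ 2))]

lemma angleIntegrand_le_mul_zero (a : ℝ) {R r : ℝ} (hR : 0 < R) (hr : R < r) :
    angleIntegrand a R r ≤ √(R ^ 2 + a ^ 2) / R * angleIntegrand 0 R r := by
  have hs : 0 < r ^ 2 - R ^ 2 := by nlinarith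
  have hr0 : 0 < r := hR.trans hr
  have hflat : angleIntegrand 0 R r = √(R ^ 2 / ((r ^ 2 - R ^ 2) * r ^ 2)) := by
    simp only [angleIntegrand, ne_eq, OfNat.ofNat_ne_zero, not_false_eq_true, zero_pow, add_zero]
  rw [hflat, angleIntegrand, sqrt_le_left (by positivity), mul_pow, div_pow,
    sq_sqrt (by positivity), sq_sqrt (by positivity), div_mul_div_comm,
    div_le_div_iff₀ (by positivity) (by positivity)]
  nlinarith [mul_nonneg (mul_nonneg (by positivity : (0:ℝ) ≤ R ^ 2 + a ^ 2) hs.le) (sq_nonneg a)]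

lemma integrableOn_angleIntegrand (a : ℝ) {R : ℝ} (hR : 0 < R) :
    IntegrableOn (angleIntegrand a R) (Ioi R) := by
  refine Integrable.mono' ((integrableOn_angleIntegrand_zero hR).const_mul (√(R ^ 2 + a ^ 2) / R))
    (measurable_angleIntegrand a R).aestronglyMeasurable ?_
  filter_upwards [ae_restrict_mem measurableSet_Ioi] with r hr
  rw [norm_of_nonneg (angleIntegrand_nonneg a R r)]
  exact angleIntegrand_le_mul_zero a hR hr

theorem wormhole_angle_change_ge_pi_general (a R : ℝ) (hR : 0 < R) :
    IntegrableOn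
      (fun r : ℝ => Real.sqrt ((R ^ 2 + a ^ 2) / ((r ^ 2 - R ^ 2) * (r ^ 2 + a ^ 2))))
      (Set.Ioi R) ∧
    Real.pi ≤
      2 * ∫ r in Set.Ioi R,
        Real.sqrt ((R ^ 2 + a ^ 2) / ((r ^ 2 - R ^ 2) * (r ^ 2 + a ^ 2))) := by
  change IntegrableOn (angleIntegrand a R) (Ioi R) ∧ π ≤ 2 * ∫ r in Ioi R, angleIntegrand a R r
  have hflat_le : ∫ r in Ioi R, angleIntegrand 0 R r ≤ ∫ r in Ioi R, angleIntegrand a R r :=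
    setIntegral_mono_on (integrableOn_angleIntegrand_zero hR) (integrableOn_angleIntegrand a hR)
      measurableSet_Ioi fun _ hr => angleIntegrand_zero_le a hR.le hr
  rw [integral_angleIntegrand_zero hR] at hflat_le
  exact ⟨integrableOn_angleIntegrand a hR, by linarith⟩

theorem wormhole_angle_change_ge_pi (a R : ℝ) (ha : 0 < a) (hR : 0 < R) :
    IntegrableOn
      (fun r : ℝ => Real.sqrt ((R ^ 2 + a ^ 2) / ((r ^ 2 - R ^ 2) * (r ^ 2 + a ^ 2))))
      (Set.Ioi R) ∧
    Real.pi ≤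
      2 * ∫ r in Set.Ioi R,
        Real.sqrt ((R ^ 2 + a ^ 2) / ((r ^ 2 - R ^ 2) * (r ^ 2 + a ^ 2))) :=
  wormhole_angle_change_ge_pi_general a R hR
end

section
/- Let a > 0 and let h be a real number with h² < a². Suppose r : [0, T] → ℝ is differentiable with r(0) = r₀ < 0 and r′(t) = √(1 − h²/(r(t)² + a²)) for all t ∈ [0, T]. Then r(t) ≥ r₀ + t·√(1 − h²/a²) for all t ∈ [0, T]; in particular, if T ≥ −r₀/√(1 − h²/a²) then there exists t₀ ∈ [0, T] with r(t₀) = 0, i.e. the geodesic crosses the wormhole throat. -/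
/-!
Along the geodesic the radial speed `√(1 - h²/(r² + a²))` is smallest at the throat, where it
equals `c = √(1 - h²/a²) > 0`. So `r` grows at least linearly with slope `c`, and it reaches `0`
by time `-r₀/c` by the intermediate value theorem.
-/

open Set

theorem Convex.mul_sub_le_image_sub_of_le_hasDerivAt {D : Set ℝ} (hD : Convex ℝ D)
    {f f' : ℝ → ℝ} (hf : ∀ x ∈ D, HasDerivAt f (f' x) x) {C : ℝ} (hC : ∀ x ∈ D, C ≤ f' x) :
    ∀ x ∈ D, ∀ y ∈ D, x ≤ y → C * (y - x) ≤ f y - f x :=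
  hD.mul_sub_le_image_sub_of_le_deriv (HasDerivAt.continuousOn hf)
    (fun x hx => (hf x (interior_subset hx)).differentiableAt.differentiableWithinAt)
    (fun x hx => (hf x (interior_subset hx)).deriv ▸ hC x (interior_subset hx))

/-- The radial speed `dr/dt` of a null geodesic with angular momentum `h` at radius `x`. -/
noncomputable def radialSpeed (a h x : ℝ) : ℝ :=
  Real.sqrt (1 - h ^ 2 / (x ^ 2 + a ^ 2))

theorem radialSpeed_zero (a h : ℝ) : radialSpeed a h 0 = Real.sqrt (1 - h ^ 2 / a ^ 2) := by
  simp [radialSpeed]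

theorem radialSpeed_zero_le {a : ℝ} (ha : a ≠ 0) (h x : ℝ) :
    radialSpeed a h 0 ≤ radialSpeed a h x := by
  rw [radialSpeed_zero]
  refine Real.sqrt_le_sqrt (sub_le_sub_left ?_ 1)
  exact div_le_div_of_nonneg_left (sq_nonneg h) (by positivity) (le_add_of_nonneg_left (sq_nonneg x))

theorem radialSpeed_zero_pos {a h : ℝ} (hh : h ^ 2 < a ^ 2) : 0 < radialSpeed a h 0 := by
  have ha : 0 < a ^ 2 := (sq_nonneg h).trans_lt hh
  rw [radialSpeed_zero, Real.sqrt_pos, sub_pos, div_lt_one ha]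
  exact hh

theorem wormhole_geodesic_crosses_throat_general (a h r₀ T : ℝ) (hh : h ^ 2 < a ^ 2)
    (hr₀ : r₀ < 0) (r : ℝ → ℝ) (hr0 : r 0 = r₀)
    (hderiv : ∀ t ∈ Set.Icc (0 : ℝ) T,
      HasDerivAt r (Real.sqrt (1 - h ^ 2 / (r t ^ 2 + a ^ 2))) t) :
    (∀ t ∈ Set.Icc (0 : ℝ) T, r₀ + t * Real.sqrt (1 - h ^ 2 / a ^ 2) ≤ r t) ∧
    (-r₀ / Real.sqrt (1 - h ^ 2 / a ^ 2) ≤ T → ∃ t₀ ∈ Set.Icc (0 : ℝ) T, r t₀ = 0) := by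
  rw [← radialSpeed_zero]
  set c := radialSpeed a h 0
  have hc : 0 < c := radialSpeed_zero_pos hh
  have ha : a ≠ 0 := by rintro rfl; nlinarith [sq_nonneg h]
  have hlinear : ∀ t ∈ Icc (0 : ℝ) T, r₀ + t * c ≤ r t := fun t ht => by
    have := (convex_Icc 0 T).mul_sub_le_image_sub_of_le_hasDerivAt hderiv
      (fun x _ => radialSpeed_zero_le ha h (r x)) 0 ⟨le_rfl, ht.1.trans ht.2⟩ t ht ht.1
    linarith
  refine ⟨hlinear, fun hT => ?_⟩
  have ht₁ : -r₀ / c ∈ Icc 0 T := ⟨div_nonneg (neg_nonneg.2 hr₀.le) hc.le, hT⟩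
  have hr_t₁ : 0 ≤ r (-r₀ / c) := by
    have := hlinear _ ht₁
    rwa [div_mul_cancel₀ _ hc.ne', add_neg_cancel] at this
  have hcont : ContinuousOn r (Icc 0 (-r₀ / c)) :=
    HasDerivAt.continuousOn fun t ht => hderiv t ⟨ht.1, ht.2.trans hT⟩
  obtain ⟨t₀, ht₀, hrt₀⟩ := intermediate_value_Icc ht₁.1 hcont ⟨hr0 ▸ hr₀.le, hr_t₁⟩
  exact ⟨t₀, ⟨ht₀.1, ht₀.2.trans hT⟩, hrt₀⟩

theorem wormhole_geodesic_crosses_throat (a h r₀ T : ℝ) (ha : 0 < a) (hh : h ^ 2 < a ^ 2)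
    (hr₀ : r₀ < 0) (hT : 0 ≤ T) (r : ℝ → ℝ) (hr0 : r 0 = r₀)
    (hderiv : ∀ t ∈ Set.Icc (0 : ℝ) T,
      HasDerivAt r (Real.sqrt (1 - h ^ 2 / (r t ^ 2 + a ^ 2))) t) :
    (∀ t ∈ Set.Icc (0 : ℝ) T, r₀ + t * Real.sqrt (1 - h ^ 2 / a ^ 2) ≤ r t) ∧
    (-r₀ / Real.sqrt (1 - h ^ 2 / a ^ 2) ≤ T → ∃ t₀ ∈ Set.Icc (0 : ℝ) T, r t₀ = 0) :=
  wormhole_geodesic_crosses_throat_general a h r₀ T hh hr₀ r hr0 hderiv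
end

section
/- Let a > 0 and suppose r : [0, ∞) → ℝ is differentiable with r(0) = r₀ < 0 and r′(t) = √(1 − a²/(r(t)² + a²)) for all t ≥ 0. Then r(t) ≤ −|r₀|·e^{−t/a} for all t ≥ 0; in particular r(t) < 0 for all t ≥ 0, i.e. the geodesic never reaches the throat at r = 0. -/
/-! Since `√(1 - a²/(r² + a²)) ≤ |r|/a`, the function `r` is a subsolution of `y' = |y|/a`, whose
solution through `r₀ < 0` is `r₀ e^{-t/a}`. The fencing theorem needs a strict barrier, so `r` is
first compared with `r₀ e^{-κt}` for `κ > 1/a`, which on `{y < 0}` solves `y' = κ|y|`, and then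
`κ → 1/a`. -/

open Real Set Filter Topology

theorem sqrt_one_sub_sq_div_sq_add_sq_le_abs_div {a : ℝ} (ha : 0 < a) (x : ℝ) :
    √(1 - a ^ 2 / (x ^ 2 + a ^ 2)) ≤ |x| / a := by
  have hx : 1 - a ^ 2 / (x ^ 2 + a ^ 2) = x ^ 2 / (x ^ 2 + a ^ 2) := by
    field_simp
    ring
  calc √(1 - a ^ 2 / (x ^ 2 + a ^ 2)) = √(x ^ 2 / (x ^ 2 + a ^ 2)) := by rw [hx]
    _ ≤ √((x / a) ^ 2) := by
        rw [div_pow]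
        gcongr
        linarith [sq_nonneg x]
    _ = |x| / a := by rw [sqrt_sq_eq_abs, abs_div, abs_of_pos ha]

section Comparison

variable {f f' : ℝ → ℝ} {K c : ℝ}

theorem le_mul_exp_of_hasDerivAt_le_mul_abs_of_lt {κ : ℝ}
    (hf : ∀ t, 0 ≤ t → HasDerivAt f (f' t) t) (hf' : ∀ t, 0 ≤ t → f' t ≤ K * |f t|)
    (hc : c < 0) (h0 : f 0 ≤ c) (hκ : K < κ) {t : ℝ} (ht : 0 ≤ t) :
    f t ≤ c * exp (-(κ * t)) := by
  have hB : ∀ s, HasDerivAt (fun s => c * exp (-(κ * s))) (c * (exp (-(κ * s)) * -κ)) s :=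
    fun s => (((hasDerivAt_id s).const_mul κ).neg.exp.const_mul c).congr_deriv (by simp)
  refine image_le_of_deriv_right_lt_deriv_boundary
    (fun s hs => (hf s hs.1).continuousAt.continuousWithinAt)
    (fun s hs => (hf s hs.1).hasDerivWithinAt) (by simpa using h0) hB ?_ ⟨ht, le_rfl⟩
  intro s hs hfs
  have hpos : 0 < -c * exp (-(κ * s)) := mul_pos (neg_pos.2 hc) (exp_pos _)
  calc f' s ≤ K * |f s| := hf' s hs.1
    _ = K * (-c * exp (-(κ * s))) := by
        rw [hfs, abs_of_neg (by nlinarith), neg_mul]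
    _ < κ * (-c * exp (-(κ * s))) := mul_lt_mul_of_pos_right hκ hpos
    _ = c * (exp (-(κ * s)) * -κ) := by ring

theorem le_mul_exp_of_hasDerivAt_le_mul_abs
    (hf : ∀ t, 0 ≤ t → HasDerivAt f (f' t) t) (hf' : ∀ t, 0 ≤ t → f' t ≤ K * |f t|)
    (hc : c < 0) (h0 : f 0 ≤ c) {t : ℝ} (ht : 0 ≤ t) :
    f t ≤ c * exp (-(K * t)) := by
  have hlim : Tendsto (fun κ => c * exp (-(κ * t))) (𝓝[>] K) (𝓝 (c * exp (-(K * t)))) :=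
    (by fun_prop : Continuous fun κ => c * exp (-(κ * t))).continuousWithinAt
  exact ge_of_tendsto hlim (eventually_nhdsWithin_of_forall fun κ hκ =>
    le_mul_exp_of_hasDerivAt_le_mul_abs_of_lt hf hf' hc h0 hκ ht)

end Comparison

theorem wormhole_critical_geodesic_never_crosses_throat (a r₀ : ℝ) (ha : 0 < a)
    (hr₀ : r₀ < 0) (r : ℝ → ℝ) (hr0 : r 0 = r₀)
    (hderiv : ∀ t : ℝ, 0 ≤ t →
      HasDerivAt r (Real.sqrt (1 - a ^ 2 / (r t ^ 2 + a ^ 2))) t) :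
    ∀ t : ℝ, 0 ≤ t → r t ≤ -|r₀| * Real.exp (-t / a) ∧ r t < 0 := by
  intro t ht
  have hbound : ∀ s, 0 ≤ s → √(1 - a ^ 2 / (r s ^ 2 + a ^ 2)) ≤ a⁻¹ * |r s| := fun s _ => by
    rw [inv_mul_eq_div]
    exact sqrt_one_sub_sq_div_sq_add_sq_le_abs_div ha (r s)
  have hr := le_mul_exp_of_hasDerivAt_le_mul_abs hderiv hbound hr₀ hr0.le ht
  have hrt : r t ≤ -|r₀| * exp (-t / a) := by
    rwa [abs_of_neg hr₀, neg_neg, neg_div, div_eq_inv_mul]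
  exact ⟨hrt, hrt.trans_lt (mul_neg_of_neg_of_pos (neg_neg_of_pos (abs_pos.2 hr₀.ne)) (exp_pos _))⟩
end

section
/- Let a > 0 and 0 < h < a, and set k = h/a. Then the function r ↦ h/√((r² + a²)(r² + a² − h²)) is integrable on ℝ and ∫_{−∞}^{∞} h / √((r² + a²)(r² + a² − h²)) dr = 2k·K(k), where K(k) = ∫_{0}^{1} dt / √((1 − t²)(1 − k²t²)) is the complete elliptic integral of the first kind. -/
/-!
The integrand is even in `r`, so the integral is twice the one over `(0, ∞)`. There substitute
`r = a √(1 − t²) / t`, i.e. `t = a / √(r² + a²)`, a bijection `(0, 1) → (0, ∞)`. Then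
`r² + a² = a² / t²`, `r² + a² − h² = (a² / t²)(1 − k² t²)` and `|dr/dt| = a / (t² √(1 − t²))`,
which turns `h dr / √((r² + a²)(r² + a² − h²))` into `k dt / √((1 − t²)(1 − k² t²))`.
Integrability follows from the bound `h / (r² + a² − h²)`.
-/

open MeasureTheory

/-- The complete elliptic integral of the first kind,
`K(k) = ∫₀¹ dt / √((1 − t²)(1 − k²t²))`. -/
noncomputable def ellipticK (k : ℝ) : ℝ :=
  ∫ t in Set.Ioo (0 : ℝ) 1, 1 / Real.sqrt ((1 - t ^ 2) * (1 - k ^ 2 * t ^ 2))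

open Set Real

lemma integrable_inv_add_sq {c : ℝ} (hc : 0 < c) : Integrable fun x : ℝ => (c + x ^ 2)⁻¹ := by
  have hs : √c ≠ 0 := (sqrt_pos.2 hc).ne'
  refine ((integrable_inv_one_add_sq.comp_div hs).const_mul c⁻¹).congr
    (Filter.Eventually.of_forall fun x => ?_)
  have hsq : √c ^ 2 = c := sq_sqrt hc.le
  simp only
  rw [div_pow, hsq]
  field_simp

noncomputable def deflectionIntegrand (a h r : ℝ) : ℝ :=
  h / √((r ^ 2 + a ^ 2) * (r ^ 2 + a ^ 2 - h ^ 2))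

lemma integrable_deflectionIntegrand {a h : ℝ} (hha : h ^ 2 < a ^ 2) :
    Integrable (deflectionIntegrand a h) := by
  refine ((integrable_inv_add_sq (sub_pos.2 hha)).const_mul |h|).mono'
    ?_ (Filter.Eventually.of_forall fun r => ?_)
  · refine (continuous_const.div (by fun_prop) fun r => ?_).aestronglyMeasurable
    have hB : 0 < r ^ 2 + a ^ 2 - h ^ 2 := by nlinarith [sq_nonneg r]
    exact (sqrt_pos.2 (mul_pos (by nlinarith [sq_nonneg h]) hB)).ne'
  · have hB : 0 < r ^ 2 + a ^ 2 - h ^ 2 := by nlinarith [sq_nonneg r]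
    have hle : r ^ 2 + a ^ 2 - h ^ 2 ≤ √((r ^ 2 + a ^ 2) * (r ^ 2 + a ^ 2 - h ^ 2)) :=
      le_sqrt_of_sq_le (by nlinarith [sq_nonneg h])
    calc ‖deflectionIntegrand a h r‖ = |h| / √((r ^ 2 + a ^ 2) * (r ^ 2 + a ^ 2 - h ^ 2)) := by
          rw [deflectionIntegrand, norm_div, norm_of_nonneg (sqrt_nonneg _), Real.norm_eq_abs]
      _ ≤ |h| / (r ^ 2 + a ^ 2 - h ^ 2) := div_le_div_of_nonneg_left (abs_nonneg h) hB hle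
      _ = |h| * (a ^ 2 - h ^ 2 + r ^ 2)⁻¹ := by ring

noncomputable def ellipticSubst (a t : ℝ) : ℝ := a * √(1 - t ^ 2) / t

lemma ellipticSubst_sq_add_sq (a : ℝ) {t : ℝ} (ht : t ∈ Ioo (0 : ℝ) 1) :
    ellipticSubst a t ^ 2 + a ^ 2 = (a / t) ^ 2 := by
  have hsq : √(1 - t ^ 2) ^ 2 = 1 - t ^ 2 := sq_sqrt (by nlinarith [ht.1, ht.2])
  rw [ellipticSubst, div_pow, mul_pow, hsq]
  field_simp [ht.1.ne']
  ring

lemma hasDerivAt_ellipticSubst (a : ℝ) {t : ℝ} (ht : t ∈ Ioo (0 : ℝ) 1) :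
    HasDerivAt (ellipticSubst a) (-(a / (t ^ 2 * √(1 - t ^ 2)))) t := by
  have hu : 0 < 1 - t ^ 2 := by nlinarith [ht.1, ht.2]
  have hsq : √(1 - t ^ 2) ^ 2 = 1 - t ^ 2 := sq_sqrt hu.le
  have hd := ((((hasDerivAt_pow 2 t).const_sub 1).sqrt hu.ne').const_mul a).div
    (hasDerivAt_id t) ht.1.ne'
  refine hd.congr_deriv ?_
  have hs : √(1 - t ^ 2) ≠ 0 := (sqrt_pos.2 hu).ne'
  have ht0 : t ≠ 0 := ht.1.ne'
  simp only [id, Nat.cast_ofNat]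
  field_simp
  linear_combination -a * hsq

lemma bijOn_ellipticSubst {a : ℝ} (ha : 0 < a) :
    BijOn (ellipticSubst a) (Ioo 0 1) (Ioi 0) := by
  refine InvOn.bijOn (f' := fun r => a / √(r ^ 2 + a ^ 2)) ⟨fun t ht => ?_, fun r hr => ?_⟩
    (fun t ht => ?_) (fun r hr => ?_)
  · simp only
    rw [ellipticSubst_sq_add_sq a ht, sqrt_sq (div_pos ha ht.1).le]
    field_simp
  · have hS : 0 < √(r ^ 2 + a ^ 2) := sqrt_pos.2 (by positivity)
    have hS2 : √(r ^ 2 + a ^ 2) ^ 2 = r ^ 2 + a ^ 2 := sq_sqrt (by positivity)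
    have h1 : 1 - (a / √(r ^ 2 + a ^ 2)) ^ 2 = (r / √(r ^ 2 + a ^ 2)) ^ 2 := by
      field_simp
      linear_combination hS2
    rw [ellipticSubst, h1, sqrt_sq (div_pos (mem_Ioi.1 hr) hS).le]
    field_simp
  · exact div_pos (mul_pos ha (sqrt_pos.2 (by nlinarith [ht.1, ht.2]))) ht.1
  · have hs : a < √(r ^ 2 + a ^ 2) := lt_sqrt_of_sq_lt (by nlinarith [mem_Ioi.1 hr])
    exact ⟨div_pos ha (ha.trans hs), (div_lt_one (ha.trans hs)).2 hs⟩

lemma abs_deriv_mul_deflectionIntegrand_ellipticSubst {a : ℝ} (ha : 0 < a) (h : ℝ) {t : ℝ}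
    (ht : t ∈ Ioo (0 : ℝ) 1) :
    |-(a / (t ^ 2 * √(1 - t ^ 2)))| * deflectionIntegrand a h (ellipticSubst a t) =
      h / a * (1 / √((1 - t ^ 2) * (1 - (h / a) ^ 2 * t ^ 2))) := by
  have hu : 0 < √(1 - t ^ 2) := sqrt_pos.2 (by nlinarith [ht.1, ht.2])
  have hprod : (ellipticSubst a t ^ 2 + a ^ 2) * (ellipticSubst a t ^ 2 + a ^ 2 - h ^ 2) =
      ((a / t) ^ 2) ^ 2 * (1 - (h / a) ^ 2 * t ^ 2) := by
    rw [ellipticSubst_sq_add_sq a ht]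
    field_simp [ht.1.ne']
  rw [deflectionIntegrand, hprod, sqrt_mul (sq_nonneg _), sqrt_sq (sq_nonneg _),
    sqrt_mul (sub_nonneg.2 (by nlinarith [ht.1, ht.2])), abs_neg,
    abs_of_pos (by have ht0 := ht.1; positivity)]
  have ht0 : t ≠ 0 := ht.1.ne'
  field_simp

lemma deflectionIntegrand_abs (a h r : ℝ) :
    deflectionIntegrand a h |r| = deflectionIntegrand a h r := by
  rw [deflectionIntegrand, deflectionIntegrand, sq_abs]

lemma setIntegral_Ioi_deflectionIntegrand {a : ℝ} (ha : 0 < a) (h : ℝ) :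
    ∫ r in Ioi 0, deflectionIntegrand a h r = h / a * ellipticK (h / a) := by
  have hbij := bijOn_ellipticSubst ha
  rw [← hbij.image_eq, integral_image_eq_integral_abs_deriv_smul measurableSet_Ioo
      (fun t ht => (hasDerivAt_ellipticSubst a ht).hasDerivWithinAt) hbij.injOn,
    setIntegral_congr_fun measurableSet_Ioo
      fun t ht => (smul_eq_mul _ _).trans (abs_deriv_mul_deflectionIntegrand_ellipticSubst ha h ht),
    integral_const_mul, ellipticK]

theorem wormhole_angle_change_eq_elliptic (a h : ℝ) (ha : 0 < a) (hh0 : 0 < h)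
    (hha : h < a) :
    Integrable (fun r : ℝ => h / Real.sqrt ((r ^ 2 + a ^ 2) * (r ^ 2 + a ^ 2 - h ^ 2))) ∧
    ∫ r : ℝ, h / Real.sqrt ((r ^ 2 + a ^ 2) * (r ^ 2 + a ^ 2 - h ^ 2)) =
      2 * (h / a) * ellipticK (h / a) := by
  refine ⟨integrable_deflectionIntegrand (by nlinarith), ?_⟩
  calc ∫ r, deflectionIntegrand a h r = ∫ r, deflectionIntegrand a h |r| := by
        simp only [deflectionIntegrand_abs]
    _ = 2 * ∫ r in Ioi 0, deflectionIntegrand a h r := integral_comp_abs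
    _ = 2 * (h / a) * ellipticK (h / a) := by
        rw [setIntegral_Ioi_deflectionIntegrand ha, mul_assoc]
end

section
/- There exists a unique k* ∈ (0, 1) such that 2k*·K(k*) = π, where K(k) = ∫_{0}^{1} dt / √((1 − t²)(1 − k²t²)). -/
open MeasureTheory

/-!
Write `f(k) = 2 k K(k)`. The integrand of `K` is increasing in `k`, so `f` is strictly increasing
on `[0, 1)`; it is continuous there by dominated convergence, the domination coming from
`(1 - t²)(1 - k²t²) ≥ (1 - b)(1 - t)` whenever `k² ≤ b`. Comparing the integrand with
`(1 - b)^{-1/2} (1 - t)^{-1/2}` gives `f(1/4) ≤ 2 < π`, while `(1 - t²)(1 - k²t²) ≤ 4 (1 - kt)²`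
gives `f(k) ≥ log (1 / (1 - k))`, which exceeds `π` at `k = 1 - e⁻⁴`. The intermediate value
theorem and strict monotonicity finish the proof.
-/

open Set Real

noncomputable def ellipticKIntegrand (k t : ℝ) : ℝ :=
  1 / √((1 - t ^ 2) * (1 - k ^ 2 * t ^ 2))

lemma ellipticK_eq_setIntegral (k : ℝ) :
    ellipticK k = ∫ t in Ioo 0 1, ellipticKIntegrand k t := rfl

lemma measurable_ellipticKIntegrand (k : ℝ) : Measurable (ellipticKIntegrand k) := by
  unfold ellipticKIntegrand
  fun_prop

section Integrand

variable {k t : ℝ}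

lemma ellipticKIntegrand_radicand_pos (hk : k ^ 2 ≤ 1) (ht : t ∈ Ioo 0 1) :
    0 < (1 - t ^ 2) * (1 - k ^ 2 * t ^ 2) := by
  obtain ⟨ht0, ht1⟩ := ht
  have ht2 : t ^ 2 < 1 := by nlinarith
  have hkt : k ^ 2 * t ^ 2 < 1 := by nlinarith
  exact mul_pos (by linarith) (by linarith)

lemma one_le_ellipticKIntegrand (hk : k ^ 2 ≤ 1) (ht : t ∈ Ioo 0 1) :
    1 ≤ ellipticKIntegrand k t := by
  have hpos := ellipticKIntegrand_radicand_pos hk ht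
  have hle : (1 - t ^ 2) * (1 - k ^ 2 * t ^ 2) ≤ 1 := by
    have : 0 ≤ k ^ 2 * t ^ 2 := by positivity
    have : 0 < 1 - k ^ 2 * t ^ 2 := pos_of_mul_pos_right hpos (by nlinarith [ht.1, ht.2])
    nlinarith [sq_nonneg t]
  rw [ellipticKIntegrand, le_div_iff₀ (sqrt_pos.mpr hpos), one_mul]
  exact sqrt_le_one.mpr hle

lemma ellipticKIntegrand_le {b : ℝ} (hk : k ^ 2 ≤ b) (hb : b < 1) (ht : t ∈ Ioo 0 1) :
    ellipticKIntegrand k t ≤ 1 / √(1 - b) * (1 - t) ^ (-(1 / 2) : ℝ) := by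
  obtain ⟨ht0, ht1⟩ := ht
  have hb' : 0 < 1 - b := by linarith
  have ht' : 0 < 1 - t := by linarith
  have hcomp : (1 - b) * (1 - t) ≤ (1 - t ^ 2) * (1 - k ^ 2 * t ^ 2) := by
    have h1 : 1 - b ≤ 1 - k ^ 2 * t ^ 2 := by
      nlinarith [mul_le_mul_of_nonneg_left (show t ^ 2 ≤ 1 by nlinarith) (sq_nonneg k)]
    have h2 : 1 - t ≤ 1 - t ^ 2 := by nlinarith
    nlinarith [mul_le_mul h1 h2 ht'.le (by linarith)]
  calc ellipticKIntegrand k t ≤ 1 / √((1 - b) * (1 - t)) :=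
        one_div_le_one_div_of_le (sqrt_pos.mpr (mul_pos hb' ht')) (sqrt_le_sqrt hcomp)
    _ = 1 / √(1 - b) * (1 - t) ^ (-(1 / 2) : ℝ) := by
        rw [sqrt_mul hb'.le, rpow_neg ht'.le, ← sqrt_eq_rpow]
        field_simp

lemma ellipticKIntegrand_le_of_sq_le {k₁ k₂ : ℝ} (h : k₁ ^ 2 ≤ k₂ ^ 2) (hk₂ : k₂ ^ 2 ≤ 1)
    (ht : t ∈ Ioo 0 1) : ellipticKIntegrand k₁ t ≤ ellipticKIntegrand k₂ t := by
  have hle : (1 - t ^ 2) * (1 - k₂ ^ 2 * t ^ 2) ≤ (1 - t ^ 2) * (1 - k₁ ^ 2 * t ^ 2) := by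
    have ht2 : 0 ≤ 1 - t ^ 2 := by nlinarith [ht.1, ht.2]
    have := mul_le_mul_of_nonneg_right h (sq_nonneg t)
    exact mul_le_mul_of_nonneg_left (by linarith) ht2
  exact one_div_le_one_div_of_le (sqrt_pos.mpr (ellipticKIntegrand_radicand_pos hk₂ ht))
    (sqrt_le_sqrt hle)

lemma inv_two_mul_one_sub_mul_le_ellipticKIntegrand (hk0 : 0 ≤ k) (hk1 : k ≤ 1)
    (ht : t ∈ Ioo 0 1) : (2 * (1 - k * t))⁻¹ ≤ ellipticKIntegrand k t := by
  obtain ⟨ht0, ht1⟩ := ht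
  have hk2 : k ^ 2 ≤ 1 := by nlinarith
  have hkt : k * t ≤ t := by nlinarith
  have hkt1 : 0 < 1 - k * t := by nlinarith
  have hbound : (1 - t ^ 2) * (1 - k ^ 2 * t ^ 2) ≤ (2 * (1 - k * t)) ^ 2 := by
    have h1 : 1 - t ^ 2 ≤ 2 * (1 - k * t) := by nlinarith
    have h2 : 1 - k ^ 2 * t ^ 2 ≤ 2 * (1 - k * t) := by nlinarith
    have h3 : 0 ≤ 1 - k ^ 2 * t ^ 2 := by nlinarith
    nlinarith [mul_le_mul h1 h2 h3 (by linarith)]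
  rw [ellipticKIntegrand, one_div]
  refine inv_anti₀ (sqrt_pos.mpr (ellipticKIntegrand_radicand_pos hk2 ⟨ht0, ht1⟩)) ?_
  calc √((1 - t ^ 2) * (1 - k ^ 2 * t ^ 2)) ≤ √((2 * (1 - k * t)) ^ 2) := sqrt_le_sqrt hbound
    _ = 2 * (1 - k * t) := sqrt_sq (by linarith)

end Integrand

lemma integrableOn_one_sub_rpow_neg_half :
    IntegrableOn (fun t : ℝ ↦ (1 - t) ^ (-(1 / 2) : ℝ)) (Ioo (0 : ℝ) 1) := by
  have h : IntervalIntegrable (fun t : ℝ ↦ (1 - t) ^ (-(1 / 2) : ℝ)) volume 0 1 := by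
    simpa using ((intervalIntegral.intervalIntegrable_rpow' (r := -(1 / 2)) (by norm_num)
      (a := 0) (b := 1)).comp_sub_left 1).symm
  exact ((intervalIntegrable_iff_integrableOn_Ioo_of_le zero_le_one).mp h)

lemma integral_one_sub_rpow_neg_half : ∫ t in Ioo (0 : ℝ) 1, (1 - t) ^ (-(1 / 2) : ℝ) = 2 := by
  rw [← integral_Ioc_eq_integral_Ioo, ← intervalIntegral.integral_of_le zero_le_one,
    intervalIntegral.integral_comp_sub_left (fun x : ℝ ↦ x ^ (-(1 / 2) : ℝ)),
    integral_rpow (Or.inl (by norm_num))]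
  norm_num

lemma integral_inv_one_sub_mul {k : ℝ} (hk0 : 0 < k) (hk1 : k < 1) :
    ∫ t in (0 : ℝ)..1, (1 - k * t)⁻¹ = k⁻¹ * log (1 - k)⁻¹ := by
  have hpos : ∀ x ∈ uIcc (1 - k) 1, 0 < x := fun x hx ↦ by
    rw [uIcc_of_le (by linarith)] at hx
    linarith [hx.1]
  rw [intervalIntegral.integral_comp_sub_mul (fun x : ℝ ↦ x⁻¹) hk0.ne', mul_one, mul_zero,
    sub_zero, integral_inv fun h ↦ (hpos 0 h).false, smul_eq_mul, one_div]

section EllipticK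

variable {k : ℝ}

lemma integrableOn_ellipticKIntegrand (hk : k ^ 2 < 1) :
    IntegrableOn (ellipticKIntegrand k) (Ioo 0 1) := by
  refine Integrable.mono' (integrableOn_one_sub_rpow_neg_half.const_mul (1 / √(1 - k ^ 2)))
    (measurable_ellipticKIntegrand k).aestronglyMeasurable ?_
  filter_upwards [ae_restrict_mem measurableSet_Ioo] with t ht
  rw [norm_of_nonneg (zero_le_one.trans (one_le_ellipticKIntegrand hk.le ht))]
  exact ellipticKIntegrand_le le_rfl hk ht

lemma one_le_ellipticK (hk : k ^ 2 < 1) : 1 ≤ ellipticK k := by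
  have h := setIntegral_ge_of_const_le measurableSet_Ioo (by simp)
    (fun t ht ↦ one_le_ellipticKIntegrand hk.le ht) (integrableOn_ellipticKIntegrand hk)
  rwa [Real.volume_real_Ioo, smul_eq_mul, mul_one, max_eq_left (by norm_num), sub_zero] at h

lemma ellipticK_le (hk : k ^ 2 < 1) : ellipticK k ≤ 2 / √(1 - k ^ 2) := by
  calc ellipticK k ≤ ∫ t in Ioo 0 1, 1 / √(1 - k ^ 2) * (1 - t) ^ (-(1 / 2) : ℝ) :=
        setIntegral_mono_on (integrableOn_ellipticKIntegrand hk)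
          (integrableOn_one_sub_rpow_neg_half.const_mul _) measurableSet_Ioo
          fun t ht ↦ ellipticKIntegrand_le le_rfl hk ht
    _ = 2 / √(1 - k ^ 2) := by
        rw [integral_const_mul, integral_one_sub_rpow_neg_half]
        ring

lemma log_inv_one_sub_le_two_mul_ellipticK (hk0 : 0 < k) (hk1 : k < 1) :
    log (1 - k)⁻¹ ≤ 2 * k * ellipticK k := by
  have hint : IntegrableOn (fun t ↦ (2 * (1 - k * t))⁻¹) (Ioo 0 1) := by
    refine (intervalIntegrable_iff_integrableOn_Ioo_of_le zero_le_one).mp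
      (intervalIntegral.intervalIntegrable_inv (fun t ht ↦ ?_) (by fun_prop))
    rw [uIcc_of_le zero_le_one] at ht
    nlinarith [ht.1, ht.2]
  have h := setIntegral_mono_on hint (integrableOn_ellipticKIntegrand (by nlinarith))
    measurableSet_Ioo fun t ht ↦ inv_two_mul_one_sub_mul_le_ellipticKIntegrand hk0.le hk1.le ht
  have hval : ∫ t in Ioo 0 1, (2 * (1 - k * t))⁻¹ = 2⁻¹ * (k⁻¹ * log (1 - k)⁻¹) := by
    simp_rw [mul_inv]
    rw [integral_const_mul, ← integral_Ioc_eq_integral_Ioo,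
      ← intervalIntegral.integral_of_le zero_le_one, integral_inv_one_sub_mul hk0 hk1]
  rw [hval, ← ellipticK_eq_setIntegral] at h
  calc log (1 - k)⁻¹ = 2 * k * (2⁻¹ * (k⁻¹ * log (1 - k)⁻¹)) := by field_simp
    _ ≤ 2 * k * ellipticK k := by gcongr

lemma continuousAt_ellipticK (hk : k ^ 2 < 1) : ContinuousAt ellipticK k := by
  change ContinuousAt (fun k ↦ ∫ t in Ioo 0 1, ellipticKIntegrand k t) k
  obtain ⟨b, hkb, hb⟩ := exists_between hk
  have hnear : ∀ᶠ k' in nhds k, k' ^ 2 < b :=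
    (continuous_pow 2).continuousAt.eventually_lt continuousAt_const hkb
  refine continuousAt_of_dominated
    (.of_forall fun k' ↦ (measurable_ellipticKIntegrand k').aestronglyMeasurable)
    ?_ (integrableOn_one_sub_rpow_neg_half.const_mul (1 / √(1 - b))) ?_
  · filter_upwards [hnear] with k' hk'
    filter_upwards [ae_restrict_mem measurableSet_Ioo] with t ht
    rw [norm_of_nonneg (zero_le_one.trans (one_le_ellipticKIntegrand (by linarith) ht))]
    exact ellipticKIntegrand_le hk'.le hb ht
  · filter_upwards [ae_restrict_mem measurableSet_Ioo] with t ht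
    unfold ellipticKIntegrand
    exact continuousAt_const.div (continuous_sqrt.continuousAt.comp (by fun_prop))
      (sqrt_pos.mpr (ellipticKIntegrand_radicand_pos hk.le ht)).ne'

lemma ellipticK_le_of_sq_le {k₁ k₂ : ℝ} (h : k₁ ^ 2 ≤ k₂ ^ 2) (hk₂ : k₂ ^ 2 < 1) :
    ellipticK k₁ ≤ ellipticK k₂ :=
  setIntegral_mono_on (integrableOn_ellipticKIntegrand (h.trans_lt hk₂))
    (integrableOn_ellipticKIntegrand hk₂) measurableSet_Ioo
    fun _ ht ↦ ellipticKIntegrand_le_of_sq_le h hk₂.le ht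

end EllipticK

lemma strictMonoOn_two_mul_ellipticK :
    StrictMonoOn (fun k ↦ 2 * k * ellipticK k) (Ico 0 1) := by
  intro k₁ ⟨hk₁, _⟩ k₂ ⟨_, hk₂⟩ h
  have hsq : k₂ ^ 2 < 1 := by nlinarith
  calc 2 * k₁ * ellipticK k₁ ≤ 2 * k₁ * ellipticK k₂ := by
        gcongr
        exact ellipticK_le_of_sq_le (by nlinarith) hsq
    _ < 2 * k₂ * ellipticK k₂ := by
        gcongr
        linarith [one_le_ellipticK hsq]

theorem exists_unique_critical_angular_momentum :
    ∃! k : ℝ, k ∈ Set.Ioo (0 : ℝ) 1 ∧ 2 * k * ellipticK k = Real.pi := by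
  set f : ℝ → ℝ := fun k ↦ 2 * k * ellipticK k
  have hquarter : (1 / 4 : ℝ) ∈ Ioo 0 1 := by norm_num
  have hnear_one : 1 - exp (-4) ∈ Ioo 0 1 :=
    ⟨sub_pos.mpr (exp_lt_one_iff.mpr (by norm_num)), sub_lt_self 1 (exp_pos _)⟩
  have hf_quarter : f (1 / 4) < π := by
    have hsqrt : 1 / 2 ≤ √(1 - (1 / 4 : ℝ) ^ 2) := le_sqrt_of_sq_le (by norm_num)
    have hK : ellipticK (1 / 4) ≤ 4 := (ellipticK_le (by norm_num)).trans <| by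
      rw [div_le_iff₀ (by linarith)]
      linarith
    simp only [f]
    linarith [pi_gt_three]
  have hf_near_one : π < f (1 - exp (-4)) := by
    have h := log_inv_one_sub_le_two_mul_ellipticK hnear_one.1 hnear_one.2
    rw [sub_sub_cancel, ← exp_neg, neg_neg, log_exp] at h
    exact pi_lt_four.trans_le h
  have hcont : ContinuousOn f (Ioo 0 1) := fun k hk ↦
    (continuousAt_const.mul continuousAt_id |>.mul
      (continuousAt_ellipticK (by nlinarith [hk.1, hk.2]))).continuousWithinAt
  have hsub := ordConnected_Ioo.uIcc_subset hquarter hnear_one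
  obtain ⟨k, hk, hfk⟩ := intermediate_value_uIcc (hcont.mono hsub)
    (mem_uIcc_of_le hf_quarter.le hf_near_one.le)
  refine ⟨k, ⟨hsub hk, hfk⟩, fun k' ⟨hk', hfk'⟩ ↦ ?_⟩
  exact (strictMonoOn_two_mul_ellipticK.mono Ioo_subset_Ico_self).injOn hk' (hsub hk)
    (hfk'.trans hfk.symm)
end
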